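/- arXiv:1811.08629 — 2 statements merged into one kernel-verified Lean document; each statement's English description precedes it below -/
import Mathlib

section
/- Let (Ω, μ) be a finite measure space, 1 < p < ∞, θ ≥ 0, and let 0 ≤ f_n be a sequence of measurable functions with f_n ↑ f pointwise a.e. Then ‖f_n‖_{p),θ} ↑ ‖f‖_{p),θ} (with values in [0,∞]). -/
open MeasureTheory ENNReal Set Filter Topology

noncomputable def eLp {Ω : Type*} [MeasurableSpace Ω] (μ : Measure Ω) (r : ℝ)
    (F : Ω → ℝ≥0∞) : ℝ≥0∞ :=
  (∫⁻ x, F x ^ r ∂μ) ^ (1 / r)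

/-- The generalized grand Lebesgue norm of an `ℝ≥0∞`-valued function:
`sup_{0<ε≤p-1} ε^(θ/(p-ε)) ‖F‖_{p-ε}`. -/
noncomputable def gnorm {Ω : Type*} [MeasurableSpace Ω] (μ : Measure Ω) (p θ : ℝ)
    (F : Ω → ℝ≥0∞) : ℝ≥0∞ :=
  ⨆ ε : Ioc (0:ℝ) (p - 1),
    ENNReal.ofReal ((ε : ℝ) ^ (θ / (p - (ε : ℝ)))) * eLp μ (p - (ε : ℝ)) F

/-- The grand Lebesgue norm `‖f‖_{p),θ}` of a real-valued function. -/
noncomputable def grandNorm {Ω : Type*} [MeasurableSpace Ω] (μ : Measure Ω) (p θ : ℝ)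
    (f : Ω → ℝ) : ℝ≥0∞ :=
  gnorm μ p θ fun x => ENNReal.ofReal |f x|

theorem stmt6 {Ω : Type*} [MeasurableSpace Ω] (μ : Measure Ω) [IsFiniteMeasure μ]
    (p θ : ℝ) (hp : 1 < p) (hθ : 0 ≤ θ) (fs : ℕ → Ω → ℝ) (f : Ω → ℝ)
    (hmeas : ∀ n, Measurable (fs n))
    (hpos : ∀ n, ∀ᵐ x ∂μ, 0 ≤ fs n x)
    (hmono : ∀ᵐ x ∂μ, Monotone fun n => fs n x)
    (hlim : ∀ᵐ x ∂μ, Tendsto (fun n => fs n x) atTop (𝓝 (f x))) :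
    Monotone (fun n => grandNorm μ p θ (fs n)) ∧
    (⨆ n, grandNorm μ p θ (fs n)) = grandNorm μ p θ f := by
  -- r = p - ε is positive for ε ∈ Ioc 0 (p-1)
  have hr : ∀ ε : Ioc (0:ℝ) (p - 1), 0 < p - (ε : ℝ) := fun ε => by
    have h1 := ε.2.2
    linarith
  -- the a.e. set where everything holds
  have hae : ∀ᵐ x ∂μ, (∀ n, 0 ≤ fs n x) ∧ Monotone (fun n => fs n x) ∧
      Tendsto (fun n => fs n x) atTop (𝓝 (f x)) :=
    ((ae_all_iff.2 hpos).and (hmono.and hlim))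
  -- eLp monotone in the function, for r > 0
  have key_mono : ∀ (r : ℝ), 0 < r → ∀ n m : ℕ, n ≤ m →
      eLp μ r (fun x => ENNReal.ofReal |fs n x|) ≤
      eLp μ r (fun x => ENNReal.ofReal |fs m x|) := by
    intro r hrpos n m hnm
    unfold eLp
    refine ENNReal.rpow_le_rpow ?_ (by positivity)
    refine lintegral_mono_ae ?_
    filter_upwards [hae] with x ⟨hx0, hxm, _⟩
    have : |fs n x| ≤ |fs m x| := by
      rw [abs_of_nonneg (hx0 n), abs_of_nonneg (hx0 m)]
      exact hxm hnm
    exact ENNReal.rpow_le_rpow (ENNReal.ofReal_le_ofReal this) hrpos.le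
  -- eLp converges: the sup over n equals eLp of f
  have key_sup : ∀ (r : ℝ), 0 < r →
      (⨆ n, eLp μ r (fun x => ENNReal.ofReal |fs n x|)) =
      eLp μ r (fun x => ENNReal.ofReal |f x|) := by
    intro r hrpos
    unfold eLp
    have hmeasF : ∀ n, AEMeasurable (fun x => (ENNReal.ofReal |fs n x|) ^ r) μ :=
      fun n => (ENNReal.continuous_rpow_const.measurable.comp
        ((hmeas n).abs.ennreal_ofReal)).aemeasurable
    have haemono : ∀ᵐ x ∂μ, Monotone fun n => (ENNReal.ofReal |fs n x|) ^ r := by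
      filter_upwards [hae] with x ⟨hx0, hxm, _⟩
      intro n m hnm
      refine ENNReal.rpow_le_rpow (ENNReal.ofReal_le_ofReal ?_) hrpos.le
      rw [abs_of_nonneg (hx0 n), abs_of_nonneg (hx0 m)]
      exact hxm hnm
    have hint : (∫⁻ x, ⨆ n, (ENNReal.ofReal |fs n x|) ^ r ∂μ) =
        ⨆ n, ∫⁻ x, (ENNReal.ofReal |fs n x|) ^ r ∂μ :=
      lintegral_iSup' hmeasF haemono
    have hptwise : (∫⁻ x, ⨆ n, (ENNReal.ofReal |fs n x|) ^ r ∂μ) =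
        ∫⁻ x, (ENNReal.ofReal |f x|) ^ r ∂μ := by
      refine lintegral_congr_ae ?_
      filter_upwards [hae, haemono] with x ⟨hx0, hxm, hxl⟩ hmF
      have htend : Tendsto (fun n => (ENNReal.ofReal |fs n x|) ^ r) atTop
          (𝓝 ((ENNReal.ofReal |f x|) ^ r)) := by
        exact (ENNReal.continuous_rpow_const.tendsto _).comp
          ((ENNReal.continuous_ofReal.tendsto _).comp hxl.abs)
      exact tendsto_nhds_unique (tendsto_atTop_iSup hmF) htend
    rw [← hptwise, hint]
    refine (Monotone.map_iSup_of_continuousAt (f := fun x : ℝ≥0∞ => x ^ (1/r)) ?_ ?_ ?_).symm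
    · exact ENNReal.continuous_rpow_const.continuousAt
    · exact fun a b hab => ENNReal.rpow_le_rpow hab (by positivity)
    · exact ENNReal.zero_rpow_of_pos (by positivity)
  constructor
  · intro n m hnm
    refine iSup_mono fun ε => ?_
    exact mul_le_mul_right (key_mono _ (hr ε) n m hnm) _
  · unfold grandNorm gnorm
    rw [iSup_comm]
    refine iSup_congr fun ε => ?_
    rw [← ENNReal.mul_iSup, key_sup _ (hr ε)]
end

section
/- Let 1 < p, q < ∞ and θ ≥ 0 on a finite measure space with fixed compact Q of nonempty interior. Then W(L^p, L^q) ⊆ W(L^{p),θ}, L^{q),θ}) with ‖f‖_{W(L^{p),θ},L^{q),θ})} ≤ D₁D₂ ‖f‖_{W(L^p,L^q)} for constants D₁, D₂ > 0 coming from the embeddings L^p ⊂ L^{p),θ} and L^q ⊂ L^{q),θ}. -/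
open MeasureTheory ENNReal Set Filter Topology Pointwise

/-- Classical Wiener amalgam norm `‖x ↦ ‖f·χ_{Q+x}‖_r‖_s`. -/
noncomputable def wnorm (μ : Measure ℝ) (Q : Set ℝ) (r s : ℝ) (f : ℝ → ℝ) : ℝ≥0∞ :=
  eLp μ s fun x => eLp μ r ((x +ᵥ Q).indicator fun t => ENNReal.ofReal |f t|)

/-- Grand Wiener amalgam norm `‖x ↦ ‖f·χ_{Q+x}‖_{p),θ}‖_{q),θ}`. -/
noncomputable def wgnorm (μ : Measure ℝ) (Q : Set ℝ) (p q θ : ℝ) (f : ℝ → ℝ) : ℝ≥0∞ :=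
  gnorm μ q θ fun x => gnorm μ p θ ((x +ᵥ Q).indicator fun t => ENNReal.ofReal |f t|)


/-- Hölder-type inequality for `lintegral` of powers, without measurability. -/
lemma lintegral_rpow_holder {Ω : Type*} [MeasurableSpace Ω] (μ : Measure Ω)
    (F : Ω → ℝ≥0∞) {r p : ℝ} (hr : 0 < r) (hrp : r < p) :
    ∫⁻ x, F x ^ r ∂μ ≤ (∫⁻ x, F x ^ p ∂μ) ^ (r / p) * μ Set.univ ^ (1 - r / p) := by
  have hp : 0 < p := hr.trans hrp
  have hP : 1 < p / r := (one_lt_div hr).2 hrp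
  have hpq : (p / r).HolderConjugate ((p / r).conjExponent) :=
    Real.HolderConjugate.conjExponent hP
  conv_lhs => rw [MeasureTheory.lintegral_def]
  refine iSup₂_le fun g hg => ?_
  rw [← SimpleFunc.lintegral_eq_lintegral]
  set h : Ω → ℝ≥0∞ := fun x => g x ^ (p / r) with hh
  have hmeas : Measurable h := ENNReal.continuous_rpow_const.measurable.comp g.measurable
  have hgh : ∀ x, g x = h x ^ (r / p) := by
    intro x
    rw [hh, ← ENNReal.rpow_mul, div_mul_div_comm, mul_comm p r, div_self (by positivity),
      ENNReal.rpow_one]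
  have hhF : ∀ x, h x ≤ F x ^ p := by
    intro x
    calc h x ≤ (F x ^ r) ^ (p / r) := ENNReal.rpow_le_rpow (hg x) (by positivity)
    _ = F x ^ p := by rw [← ENNReal.rpow_mul, mul_div_cancel₀ _ hr.ne']
  calc ∫⁻ x, g x ∂μ = ∫⁻ x, (((fun x => h x ^ (r / p)) * fun _ => 1 : Ω → ℝ≥0∞)) x ∂μ := by
        simp [← hgh]
    _ ≤ (∫⁻ x, (h x ^ (r / p)) ^ (p / r) ∂μ) ^ (1 / (p / r)) *
        (∫⁻ x, (1 : ℝ≥0∞) ^ ((p / r).conjExponent) ∂μ) ^ (1 / (p / r).conjExponent) :=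
      ENNReal.lintegral_mul_le_Lp_mul_Lq μ hpq
        ((hmeas.pow_const _).aemeasurable) aemeasurable_const
    _ ≤ (∫⁻ x, F x ^ p ∂μ) ^ (r / p) * μ Set.univ ^ (1 - r / p) := by
      gcongr
      · rw [one_div, inv_div]
        refine (ENNReal.rpow_le_rpow (lintegral_mono fun x => ?_) (by positivity))
        rw [← ENNReal.rpow_mul, div_mul_div_comm, mul_comm r p, div_self (by positivity),
          ENNReal.rpow_one]
        exact hhF x
      · rw [ENNReal.one_rpow, lintegral_one]
        apply le_of_eq
        congr 1
        rw [one_div, ← hpq.one_sub_inv, inv_div]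

lemma eLp_holder {Ω : Type*} [MeasurableSpace Ω] (μ : Measure Ω)
    (F : Ω → ℝ≥0∞) {r p : ℝ} (hr : 0 < r) (hrp : r < p) :
    eLp μ r F ≤ μ Set.univ ^ (1 / r - 1 / p) * eLp μ p F := by
  have hp : 0 < p := hr.trans hrp
  unfold eLp
  calc (∫⁻ x, F x ^ r ∂μ) ^ (1 / r)
      ≤ ((∫⁻ x, F x ^ p ∂μ) ^ (r / p) * μ Set.univ ^ (1 - r / p)) ^ (1 / r) :=
        ENNReal.rpow_le_rpow (lintegral_rpow_holder μ F hr hrp) (by positivity)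
    _ = μ Set.univ ^ (1 / r - 1 / p) * (∫⁻ x, F x ^ p ∂μ) ^ (1 / p) := by
        rw [ENNReal.mul_rpow_of_nonneg _ _ (by positivity), ← ENNReal.rpow_mul,
          ← ENNReal.rpow_mul, mul_comm]
        congr 1
        · congr 1; field_simp
        · congr 1; field_simp

lemma eLp_mono {Ω : Type*} [MeasurableSpace Ω] (μ : Measure Ω) {r : ℝ} (hr : 0 ≤ r)
    {F G : Ω → ℝ≥0∞} (h : ∀ x, F x ≤ G x) : eLp μ r F ≤ eLp μ r G := by
  unfold eLp
  exact ENNReal.rpow_le_rpow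
    (lintegral_mono fun x => ENNReal.rpow_le_rpow (h x) hr) (by positivity)

lemma gnorm_mono {Ω : Type*} [MeasurableSpace Ω] (μ : Measure Ω) {p θ : ℝ} (hp : 1 < p)
    {F G : Ω → ℝ≥0∞} (h : ∀ x, F x ≤ G x) : gnorm μ p θ F ≤ gnorm μ p θ G := by
  refine iSup_mono fun ε => ?_
  obtain ⟨ε, hε0, hε1⟩ := ε
  exact mul_le_mul_right (eLp_mono μ (by simp only; linarith) h) _

lemma gnorm_le_eLp {Ω : Type*} [MeasurableSpace Ω] (μ : Measure Ω) [IsFiniteMeasure μ]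
    {p θ : ℝ} (hp : 1 < p) (hθ : 0 ≤ θ) (F : Ω → ℝ≥0∞) :
    gnorm μ p θ F ≤
      ENNReal.ofReal (max 1 ((p - 1) ^ θ)) * max 1 (μ Set.univ ^ (1 - 1 / p))
        * eLp μ p F := by
  refine iSup_le fun ε => ?_
  obtain ⟨ε, hε0, hε1⟩ := ε
  simp only
  set r := p - ε with hr
  have hr1 : 1 ≤ r := by rw [hr]; linarith
  have hr0 : 0 < r := lt_of_lt_of_le one_pos hr1
  have hrp : r < p := by rw [hr]; linarith
  have h1 : ENNReal.ofReal (ε ^ (θ / r)) ≤ ENNReal.ofReal (max 1 ((p - 1) ^ θ)) := by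
    apply ENNReal.ofReal_le_ofReal
    rcases le_or_gt ε 1 with h | h
    · exact le_max_of_le_left (Real.rpow_le_one hε0.le h (by positivity))
    · refine le_max_of_le_right ?_
      calc ε ^ (θ / r) ≤ ε ^ θ :=
            Real.rpow_le_rpow_of_exponent_le h.le (div_le_self hθ hr1)
        _ ≤ (p - 1) ^ θ := Real.rpow_le_rpow (by linarith) hε1 hθ
  have h2 : eLp μ r F ≤ max 1 (μ Set.univ ^ (1 - 1 / p)) * eLp μ p F := by
    refine le_trans (eLp_holder μ F hr0 hrp) (mul_le_mul_left ?_ _)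
    have hδ : (0:ℝ) ≤ 1 / r - 1 / p := by
      have : 1 / p ≤ 1 / r := one_div_le_one_div_of_le hr0 hrp.le
      linarith
    rcases le_or_gt (μ Set.univ) 1 with h | h
    · exact le_max_of_le_left (ENNReal.rpow_le_one h hδ)
    · refine le_max_of_le_right (ENNReal.rpow_le_rpow_of_exponent_le h.le ?_)
      have : 1 / r ≤ 1 := by
        rw [div_le_one hr0]; exact hr1
      linarith
  calc ENNReal.ofReal (ε ^ (θ / r)) * eLp μ r F
      ≤ ENNReal.ofReal (max 1 ((p - 1) ^ θ)) *
        (max 1 (μ Set.univ ^ (1 - 1 / p)) * eLp μ p F) := mul_le_mul' h1 h2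
    _ = _ := (mul_assoc _ _ _).symm

lemma gnorm_const_mul_le {Ω : Type*} [MeasurableSpace Ω] (μ : Measure Ω) {q θ : ℝ}
    (hq : 1 < q) (c : ℝ≥0∞) (hc : c ≠ ⊤) (H : Ω → ℝ≥0∞) :
    gnorm μ q θ (fun x => c * H x) ≤ c * gnorm μ q θ H := by
  refine iSup_le fun ε => ?_
  obtain ⟨ε, hε0, hε1⟩ := ε
  simp only
  set r := q - ε with hr
  have hr1 : 1 ≤ r := by rw [hr]; linarith
  have hr0 : 0 < r := lt_of_lt_of_le one_pos hr1
  have key : eLp μ r (fun x => c * H x) = c * eLp μ r H := by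
    unfold eLp
    simp_rw [ENNReal.mul_rpow_of_nonneg _ _ hr0.le]
    rw [lintegral_const_mul' _ _ (ENNReal.rpow_ne_top_of_nonneg hr0.le hc),
      ENNReal.mul_rpow_of_nonneg _ _ (by positivity), ← ENNReal.rpow_mul,
      mul_one_div, div_self hr0.ne', ENNReal.rpow_one]
  rw [key, ← mul_assoc, mul_comm _ c, mul_assoc]
  refine mul_le_mul_right ?_ c
  exact le_iSup_of_le ⟨ε, hε0, hε1⟩ le_rfl

theorem stmt12 (μ : Measure ℝ) [IsFiniteMeasure μ] (Q : Set ℝ)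
    (hQ : IsCompact Q) (hQ' : (interior Q).Nonempty)
    (p q θ : ℝ) (hp : 1 < p) (hq : 1 < q) (hθ : 0 ≤ θ) :
    ∃ D₁ : ℝ, 0 < D₁ ∧ ∃ D₂ : ℝ, 0 < D₂ ∧ ∀ f : ℝ → ℝ,
      wgnorm μ Q p q θ f ≤ ENNReal.ofReal (D₁ * D₂) * wnorm μ Q p q f := by
  set Kp : ℝ≥0∞ := ENNReal.ofReal (max 1 ((p - 1) ^ θ)) * max 1 (μ Set.univ ^ (1 - 1 / p))
    with hKp
  set Kq : ℝ≥0∞ := ENNReal.ofReal (max 1 ((q - 1) ^ θ)) * max 1 (μ Set.univ ^ (1 - 1 / q))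
    with hKq
  have hfin : ∀ s : ℝ, 1 < s →
      (ENNReal.ofReal (max 1 ((s - 1) ^ θ)) * max 1 (μ Set.univ ^ (1 - 1 / s))) ≠ ⊤ ∧
      1 ≤ ENNReal.ofReal (max 1 ((s - 1) ^ θ)) * max 1 (μ Set.univ ^ (1 - 1 / s)) := by
    intro s hs
    constructor
    · refine ENNReal.mul_ne_top ENNReal.ofReal_ne_top ?_
      simp only [ne_eq, max_eq_top, ENNReal.one_ne_top, false_or]
      exact ENNReal.rpow_ne_top_of_nonneg (by rw [sub_nonneg, div_le_one (by linarith)]; linarith) (measure_ne_top μ _)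
    · calc (1:ℝ≥0∞) = 1 * 1 := (one_mul 1).symm
        _ ≤ _ := mul_le_mul' (ENNReal.one_le_ofReal.2 (le_max_left _ _)) (le_max_left _ _)
  obtain ⟨hKp_ne, hKp_one⟩ := hfin p hp
  obtain ⟨hKq_ne, hKq_one⟩ := hfin q hq
  rw [← hKp] at hKp_ne hKp_one
  rw [← hKq] at hKq_ne hKq_one
  refine ⟨Kp.toReal, ENNReal.toReal_pos (by intro h; simp [h] at hKp_one) hKp_ne,
    Kq.toReal, ENNReal.toReal_pos (by intro h; simp [h] at hKq_one) hKq_ne, fun f => ?_⟩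
  have hof : ENNReal.ofReal (Kp.toReal * Kq.toReal) = Kp * Kq := by
    rw [ENNReal.ofReal_mul ENNReal.toReal_nonneg, ENNReal.ofReal_toReal hKp_ne,
      ENNReal.ofReal_toReal hKq_ne]
  rw [hof]
  set H : ℝ → ℝ≥0∞ :=
    fun x => eLp μ p ((x +ᵥ Q).indicator fun t => ENNReal.ofReal |f t|) with hH
  calc wgnorm μ Q p q θ f
      ≤ gnorm μ q θ (fun x => Kp * H x) := by
        refine gnorm_mono μ hq fun x => ?_
        exact gnorm_le_eLp μ hp hθ _
    _ ≤ Kp * gnorm μ q θ H := gnorm_const_mul_le μ hq Kp hKp_ne H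
    _ ≤ Kp * (Kq * eLp μ q H) := mul_le_mul_right (gnorm_le_eLp μ hq hθ H) Kp
    _ = Kp * Kq * wnorm μ Q p q f := by rw [← mul_assoc]; rfl
end
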